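/- In the edge gadget with parameter m ≥ 1 (so valuations involve 2m²), consider the assignment μ matching β↔α', γ↔α, δ↔η (the dashed edges), with each matched buyer paying a price equal to their budget, so that matched buyer payoffs are π_β(α') = 2m²+2, π_γ(α) = 2m²+5, π_δ(η) = 2m²+9 and matched seller payoffs are π_{α'}(β) = 8, π_η(δ) = 1, while unmatched agents receive payoff 0. Then no blocking pair of μ involves any agent from {β, γ, δ, α', η}. -/

import Mathlib

namespace EdgeGadget

/-- The five buyers of the edge gadget. -/
inductive Buyer : Type
  | β | γ | δ | ε | ε'
  deriving DecidableEq

instance instFintypeBuyer : Fintype Buyer where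
  elems := {.β, .γ, .δ, .ε, .ε'}
  complete := by intro x; cases x <;> simp

/-- The three sellers of the edge gadget. -/
inductive Seller : Type
  | α | η | α'
  deriving DecidableEq

instance instFintypeSeller : Fintype Seller where
  elems := {.α, .η, .α'}
  complete := by intro x; cases x <;> simp

open Buyer Seller

/-- Buyer budgets. -/
def budget : Buyer → ℤ
  | .β => 9 | .γ => 7 | .δ => 9 | .ε => 8 | .ε' => 8

/-- Seller reserve values. -/
def reserve : Seller → ℤ
  | .α => 5 | .η => 8 | .α' => 1

/-- Buyer valuations, parametrized by `m` (written `k` here). -/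
def val (k : ℤ) : Buyer → Seller → ℤ
  | .β, .α => 0        | .β, .η => 2*k^2 + 12  | .β, .α' => 2*k^2 + 11
  | .γ, .α => 2*k^2 + 12 | .γ, .η => 0          | .γ, .α' => 2*k^2 + 13
  | .δ, .α => 2*k^2 + 16 | .δ, .η => 2*k^2 + 18 | .δ, .α' => 0
  | .ε, .α => 3        | .ε, .η => 0          | .ε, .α' => 0
  | .ε', .α => 0       | .ε', .η => 0         | .ε', .α' => 7

/-- A (partial) matching of buyers to sellers: no seller gets two buyers. -/
def IsMatching (μ : Buyer → Option Seller) : Prop :=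
  ∀ i i' j, μ i = some j → μ i' = some j → i = i'

/-- Payoff of buyer `i` under matching `μ`, with each matched buyer paying a price equal
to their budget: `v_i(j) - b^i` if matched to `j`, and `0` if unmatched. -/
def buyerPayoff (k : ℤ) (μ : Buyer → Option Seller) (i : Buyer) : ℤ :=
  match μ i with
  | some j => val k i j - budget i
  | none => 0

/-- Payoff of seller `j` under matching `μ`: `b^i - r_j` if matched to buyer `i`
(prices equal the matched buyer's budget), and `0` if unmatched. -/
def sellerPayoff (μ : Buyer → Option Seller) (j : Seller) : ℤ :=
  ∑ i : Buyer, if μ i = some j then budget i - reserve j else 0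

/-- `(i,j)` is a blocking pair of `μ`: `π_i(j) > π_i(μ(i))` and `π_j(i) > π_j(μ⁻¹(j))`. -/
def IsBlockingPair (k : ℤ) (μ : Buyer → Option Seller) (i : Buyer) (j : Seller) : Prop :=
  buyerPayoff k μ i < val k i j - budget i ∧
    sellerPayoff μ j < budget i - reserve j

/-- A matching is stable if it has no blocking pair. -/
def IsStable (k : ℤ) (μ : Buyer → Option Seller) : Prop :=
  IsMatching μ ∧ ∀ i j, ¬ IsBlockingPair k μ i j

/-- The "dashed" matching: `β ↔ α'`, `γ ↔ α`, `δ ↔ η`; `ε`, `ε'` unmatched. -/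
def dashedMatch : Buyer → Option Seller
  | .β => some .α' | .γ => some .α | .δ => some .η | .ε => none | .ε' => none

/-! A seller's payoff is its partner's budget minus its reserve, so a seller blocks only with a
buyer of strictly larger budget than its partner. Since `η` and `α'` hold buyers of the largest
budget 9, only `α` can block, and its partner `γ` cannot block with it. The other two buyers
already do better with their partners than with `α`: `v_β(α) = 0` and `v_δ(α) < v_δ(η)`. -/

theorem buyerPayoff_of_eq_some {k : ℤ} {μ : Buyer → Option Seller} {i : Buyer} {j : Seller}
    (hi : μ i = some j) : buyerPayoff k μ i = val k i j - budget i := by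
  simp only [buyerPayoff, hi]

theorem sellerPayoff_of_eq_some {μ : Buyer → Option Seller} (hμ : IsMatching μ) {i : Buyer}
    {j : Seller} (hi : μ i = some j) : sellerPayoff μ j = budget i - reserve j := by
  refine (Finset.sum_eq_single i (fun i' _ hne => ?_) (by simp)).trans (if_pos hi)
  exact if_neg fun hi' => hne (hμ i' i j hi' hi)

namespace IsBlockingPair

variable {k : ℤ} {μ : Buyer → Option Seller} {i : Buyer} {j : Seller}

theorem val_lt (h : IsBlockingPair k μ i j) {j' : Seller} (hi : μ i = some j') :
    val k i j' < val k i j := by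
  have := h.1
  rw [buyerPayoff_of_eq_some hi] at this
  linarith

theorem budget_lt (hμ : IsMatching μ) (h : IsBlockingPair k μ i j) {i' : Buyer}
    (hj : μ i' = some j) : budget i' < budget i := by
  have := h.2
  rw [sellerPayoff_of_eq_some hμ hj] at this
  linarith

end IsBlockingPair

theorem dashedMatch_isMatching : IsMatching dashedMatch := by
  unfold IsMatching
  decide

theorem budget_le_nine (i : Buyer) : budget i ≤ 9 := by
  cases i <;> decide

theorem eq_α_of_isBlockingPair_dashedMatch {k : ℤ} {i : Buyer} {j : Seller}
    (h : IsBlockingPair k dashedMatch i j) : j = α := by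
  cases j with
  | α => rfl
  | η => exact absurd (h.budget_lt dashedMatch_isMatching (i' := δ) rfl) (budget_le_nine i).not_gt
  | α' => exact absurd (h.budget_lt dashedMatch_isMatching (i' := β) rfl) (budget_le_nine i).not_gt

theorem dashed_no_blocking_pair_general (k : ℤ) :
    ∀ i j, IsBlockingPair k dashedMatch i j →
      i ∉ ({.β, .γ, .δ} : Set Buyer) ∧ j ∉ ({.α', .η} : Set Seller) := by
  intro i j h
  obtain rfl := eq_α_of_isBlockingPair_dashedMatch h
  refine ⟨?_, by simp⟩
  rintro (rfl | rfl | rfl)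
  · have := h.val_lt (j' := α') rfl
    simp only [val] at this
    linarith [sq_nonneg k]
  · exact lt_irrefl _ (h.budget_lt dashedMatch_isMatching (i' := γ) rfl)
  · have := h.val_lt (j' := η) rfl
    simp only [val] at this
    linarith

/-- In the edge gadget with parameter `m ≥ 1`, no blocking pair of the
dashed matching (prices at the matched buyers' budgets) involves any agent from
`{β, γ, δ, α', η}`. -/
theorem dashed_no_blocking_pair (k : ℤ) (hk : 1 ≤ k) :
    ∀ i j, IsBlockingPair k dashedMatch i j →
      i ∉ ({.β, .γ, .δ} : Set Buyer) ∧ j ∉ ({.α', .η} : Set Seller) :=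
  dashed_no_blocking_pair_general k

end EdgeGadget
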